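/- Let G = (V_s, V_p, E) be a bipartite graph that is not a matching (i.e., some vertex of G has degree at least 2). Then r(G) ≥ DT(G) + 1, where DT(G) is the distinctness of G. -/

import Mathlib

/-!
Fix a labeling of length `r`. If two vertices `a ≠ b` of `V_p` have labels with a common prefix
of length `k`, every `s ∈ N(a) ∖ N(b)` overlaps `a` by more than `k` letters (or it would overlap
`b` as well). Either these overlap lengths are pairwise distinct, so `|N(a) ∖ N(b)| ≤ r - k`, or
two of them agree at some `t > k`, and then two labels of `V_s` share a suffix of length `t`.
Arguing the same way on the other side and inducting on `r - k` gives `DT(G) ≤ r - k`. A vertex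
`u` with two neighbours `p₁, p₂` starts this with `k = 0`, where the overlap length of `u` itself
is already taken among the values `1, …, r`; hence `DT(G) ≤ r - 1`.

That `r(G)` is attained at all needs a labeling to exist; one is built by adding the edges one
at a time, each step doubling the length of the labels.
-/

namespace Readability

/-- `x` overlaps `y` by `i`: `1 ≤ i ≤ min |x| |y|` and the length-`i` suffix of `x`
equals the length-`i` prefix of `y`. -/
def OverlapsBy {α : Type*} (x y : List α) (i : ℕ) : Prop :=
  1 ≤ i ∧ i ≤ min x.length y.length ∧ x.drop (x.length - i) = y.take i

/-- `ov x y`: the minimum `i` such that `x` overlaps `y` by `i`, or `0` if none exists. -/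
noncomputable def ov {α : Type*} (x y : List α) : ℕ := sInf {i | OverlapsBy x y i}

/-- An overlap labeling of length `r` of the bipartite graph with parts `Vs`, `Vp` and
edge relation `E ⊆ Vs × Vp`. -/
def IsOverlapLabeling {α Vs Vp : Type*} (E : Vs → Vp → Prop) (r : ℕ)
    (ls : Vs → List α) (lp : Vp → List α) : Prop :=
  (∀ u, (ls u).length = r) ∧ (∀ v, (lp v).length = r) ∧
    ∀ u v, E u v ↔ ∃ i, OverlapsBy (ls u) (lp v) i

/-- Bipartite readability: the least `r` admitting an overlap labeling of length `r`
(over the alphabet `ℕ`). -/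
noncomputable def bReadability {Vs Vp : Type*} (E : Vs → Vp → Prop) : ℕ :=
  sInf {r | ∃ (ls : Vs → List ℕ) (lp : Vp → List ℕ), IsOverlapLabeling E r ls lp}

/-- An injective overlap labeling of length `r` of the digraph with arc relation `A`. -/
def IsInjOverlapLabeling {V : Type*} (A : V → V → Prop) (r : ℕ) (ℓ : V → List ℕ) : Prop :=
  (∀ v, (ℓ v).length = r) ∧ Function.Injective ℓ ∧
    ∀ u v, A u v ↔ 0 < ov (ℓ u) (ℓ v) ∧ ov (ℓ u) (ℓ v) < r

/-- Digraph readability: the least `r` admitting an injective overlap labeling of length `r`. -/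
noncomputable def dReadability {V : Type*} (A : V → V → Prop) : ℕ :=
  sInf {r | ∃ ℓ : V → List ℕ, IsInjOverlapLabeling A r ℓ}

/-- A decomposition of size `k`: a weight function on edges with values in `{1,…,k}`. -/
def IsDecomposition {Vs Vp : Type*} (E : Vs → Vp → Prop) (k : ℕ) (w : Vs → Vp → ℕ) : Prop :=
  ∀ u v, E u v → 1 ≤ w u v ∧ w u v ≤ k

/-- An induced `P₄` with consecutive edges `(s1,p1), (s2,p1), (s2,p2)`. -/
def InducedP4 {Vs Vp : Type*} (E : Vs → Vp → Prop) (s1 s2 : Vs) (p1 p2 : Vp) : Prop :=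
  s1 ≠ s2 ∧ p1 ≠ p2 ∧ E s1 p1 ∧ E s2 p1 ∧ E s2 p2 ∧ ¬ E s1 p2

/-- The `P₄`-rule: on each induced `P₄`, if the middle edge has maximum weight then its weight
is at least the sum of the weights of the two outer edges. -/
def SatisfiesP4Rule {Vs Vp : Type*} (E : Vs → Vp → Prop) (w : Vs → Vp → ℕ) : Prop :=
  ∀ s1 s2 p1 p2, InducedP4 E s1 s2 p1 p2 →
    w s2 p1 = max (w s1 p1) (max (w s2 p1) (w s2 p2)) →
    w s1 p1 + w s2 p2 ≤ w s2 p1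

/-- The strict `P₄`-rule: as the `P₄`-rule, with strict inequality. -/
def SatisfiesStrictP4Rule {Vs Vp : Type*} (E : Vs → Vp → Prop) (w : Vs → Vp → ℕ) : Prop :=
  ∀ s1 s2 p1 p2, InducedP4 E s1 s2 p1 p2 →
    w s2 p1 = max (w s1 p1) (max (w s2 p1) (w s2 p2)) →
    w s1 p1 + w s2 p2 < w s2 p1

/-- `C₄`-freeness of a bipartite graph. -/
def C4Free {Vs Vp : Type*} (E : Vs → Vp → Prop) : Prop :=
  ∀ (s1 s2 : Vs) (p1 p2 : Vp), s1 ≠ s2 → p1 ≠ p2 →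
    ¬ (E s1 p1 ∧ E s1 p2 ∧ E s2 p1 ∧ E s2 p2)

/-- The subgraph `G_i` of a decomposition: edges of weight exactly `i`. -/
def SubAt {Vs Vp : Type*} (E : Vs → Vp → Prop) (w : Vs → Vp → ℕ) (i : ℕ) :
    Vs → Vp → Prop :=
  fun u v => E u v ∧ w u v = i

/-- A bipartite edge relation is a disjoint union of bicliques iff it has no induced `P₄`,
i.e. whenever `(s1,p1), (s2,p1), (s2,p2)` are edges, so is `(s1,p2)`. -/
def BicliqueUnion {Vs Vp : Type*} (H : Vs → Vp → Prop) : Prop :=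
  ∀ s1 s2 p1 p2, H s1 p1 → H s2 p1 → H s2 p2 → H s1 p2

/-- The HUB-rule for a decomposition `w`:
(i) every level graph `G_i` is a disjoint union of bicliques, and
(ii) non-isolated twins in `G_i` (for `i ≥ 2`) are twins in every `G_j` with `1 ≤ j ≤ i-1`
(stated for both parts of the bipartition). -/
def SatisfiesHUBRule {Vs Vp : Type*} (E : Vs → Vp → Prop) (w : Vs → Vp → ℕ) : Prop :=
  (∀ i, 1 ≤ i → BicliqueUnion (SubAt E w i)) ∧
  (∀ i, 2 ≤ i → ∀ u v : Vs, u ≠ v → (∃ p, SubAt E w i u p) →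
      (∀ p, SubAt E w i u p ↔ SubAt E w i v p) →
      ∀ j, 1 ≤ j → j ≤ i - 1 → ∀ p, SubAt E w j u p ↔ SubAt E w j v p) ∧
  (∀ i, 2 ≤ i → ∀ u v : Vp, u ≠ v → (∃ s, SubAt E w i s u) →
      (∀ s, SubAt E w i s u ↔ SubAt E w i s v) →
      ∀ j, 1 ≤ j → j ≤ i - 1 → ∀ s, SubAt E w j s u ↔ SubAt E w j s v)

/-- The HUB number: minimum size of a decomposition satisfying the HUB-rule. -/
noncomputable def hubNumber {Vs Vp : Type*} (E : Vs → Vp → Prop) : ℕ :=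
  sInf {k | ∃ w, IsDecomposition E k w ∧ SatisfiesHUBRule E w}

/-- The underlying undirected simple graph on `Vs ⊕ Vp` of a bipartite graph. -/
def underlyingGraph {Vs Vp : Type*} (E : Vs → Vp → Prop) : SimpleGraph (Vs ⊕ Vp) where
  Adj x y := (∃ u v, x = Sum.inl u ∧ y = Sum.inr v ∧ E u v) ∨
    (∃ u v, x = Sum.inr v ∧ y = Sum.inl u ∧ E u v)
  symm := by
    constructor
    rintro x y (⟨u, v, rfl, rfl, h⟩ | ⟨u, v, rfl, rfl, h⟩)
    · exact Or.inr ⟨u, v, rfl, rfl, h⟩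
    · exact Or.inl ⟨u, v, rfl, rfl, h⟩
  loopless := by
    constructor
    rintro x (⟨u, v, h1, h2, -⟩ | ⟨u, v, h1, h2, -⟩) <;> subst h1 <;> simp_all

/-- The radius of a graph: the least `r` such that some vertex has eccentricity at most `r`
(for a finite connected graph this is `min_u max_v dist(u,v)`). -/
noncomputable def graphRadius {V : Type*} (G : SimpleGraph V) : ℕ :=
  sInf {r | ∃ u, ∀ v, G.dist u v ≤ r}

/-- Distinctness of two vertices `u, v` of the same part (here the `Vs`-part, with
neighborhoods taken in `Vp`): `max(|N(u)∖N(v)|, |N(v)∖N(u)|)`. -/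
noncomputable def DTpair {Vs Vp : Type*} (E : Vs → Vp → Prop) (u v : Vs) : ℕ :=
  max {p : Vp | E u p ∧ ¬ E v p}.ncard {p : Vp | E v p ∧ ¬ E u p}.ncard

/-- Distinctness of a bipartite graph: the minimum of `DT(u,v)` over pairs of distinct
vertices in the same part. -/
noncomputable def distinctness {Vs Vp : Type*} (E : Vs → Vp → Prop) : ℕ :=
  sInf ({d | ∃ u v : Vs, u ≠ v ∧ d = DTpair E u v} ∪
        {d | ∃ u v : Vp, u ≠ v ∧ d = DTpair (fun p s => E s p) u v})

/-- A bipartite graph fails to be a matching iff some vertex has degree at least 2. -/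
def NotMatching {Vs Vp : Type*} (E : Vs → Vp → Prop) : Prop :=
  (∃ u : Vs, ∃ p1 p2 : Vp, p1 ≠ p2 ∧ E u p1 ∧ E u p2) ∨
  (∃ p : Vp, ∃ u1 u2 : Vs, u1 ≠ u2 ∧ E u1 p ∧ E u2 p)

section Overlap

variable {α : Type*}

theorem overlapsBy_reverse_iff {x y : List α} {i : ℕ} :
    OverlapsBy y.reverse x.reverse i ↔ OverlapsBy x y i := by
  simp only [OverlapsBy, List.length_reverse, List.drop_reverse, List.take_reverse,
    List.reverse_inj, min_comm y.length]
  constructor <;> rintro ⟨h1, h2, h3⟩ <;> refine ⟨h1, h2, ?_⟩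
  · rwa [Nat.sub_sub_self (by omega), eq_comm] at h3
  · rwa [Nat.sub_sub_self (by omega), eq_comm]

theorem OverlapsBy.of_take_eq {x y y' : List α} {i k : ℕ} (h : OverlapsBy x y i) (hik : i ≤ k)
    (hk : y.take k = y'.take k) : OverlapsBy x y' i := by
  obtain ⟨h1, h2, h3⟩ := h
  have hlen := congrArg List.length hk
  simp only [List.length_take] at hlen
  refine ⟨h1, by omega, ?_⟩
  have := congrArg (List.take i) hk
  rwa [List.take_take, List.take_take, Nat.min_eq_left hik, ← h3] at this

theorem OverlapsBy.take_reverse_eq {x x' y : List α} {t : ℕ} (h : OverlapsBy x y t)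
    (h' : OverlapsBy x' y t) : x.reverse.take t = x'.reverse.take t := by
  rw [List.take_reverse, List.take_reverse, h.2.2, h'.2.2]

theorem overlapsBy_append_append_iff {X Y Z W : List α} {i : ℕ} (hY : i ≤ Y.length)
    (hZ : i ≤ Z.length) : OverlapsBy (X ++ Y) (Z ++ W) i ↔ OverlapsBy Y Z i := by
  have hdrop : (X ++ Y).drop ((X ++ Y).length - i) = Y.drop (Y.length - i) := by
    rw [List.length_append, Nat.add_sub_assoc hY, List.drop_length_add_append]
  unfold OverlapsBy
  rw [hdrop, List.take_append_of_le_length hZ, List.length_append, List.length_append]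
  constructor <;> rintro ⟨h1, -, h3⟩ <;> exact ⟨h1, by omega, h3⟩

-- Such an overlap would align the middle `c` of the first word with a letter of `Z`.
theorem not_overlapsBy_append_cons {X Y Z W : List α} {c : α} {r i : ℕ} (hX : X.length = r)
    (hY : Y.length = r) (hZ : Z.length = r) (hc : c ∉ Z) (hri : r < i) (hir : i < 2 * r + 1) :
    ¬ OverlapsBy (X ++ c :: Y) (Z ++ c :: W) i := by
  rintro ⟨-, -, h⟩
  have hx : (X ++ c :: Y).length = 2 * r + 1 := by simp [hX, hY]; omega
  have hj := congrArg (·[i - r - 1]?) h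
  simp only [List.getElem?_drop, List.getElem?_take, if_pos (show i - r - 1 < i by omega),
    hx] at hj
  rw [show 2 * r + 1 - i + (i - r - 1) = X.length by omega,
    List.getElem?_append_right le_rfl, List.getElem?_append_left (by omega)] at hj
  exact hc (List.mem_of_getElem? (by simpa using hj.symm))

theorem exists_overlapsBy_append_cons_iff {X Y Z W : List α} {c : α} {r : ℕ}
    (hX : X.length = r) (hY : Y.length = r) (hZ : Z.length = r) (hW : W.length = r)
    (hc : c ∉ Z) :
    (∃ i, OverlapsBy (X ++ c :: Y) (Z ++ c :: W) i) ↔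
      (∃ i, OverlapsBy Y Z i) ∨ (X = Z ∧ Y = W) := by
  have hx : (X ++ c :: Y).length = 2 * r + 1 := by simp [hX, hY]; omega
  have hy : (Z ++ c :: W).length = 2 * r + 1 := by simp [hZ, hW]; omega
  have hshort : ∀ i ≤ r, OverlapsBy (X ++ c :: Y) (Z ++ c :: W) i ↔ OverlapsBy Y Z i :=
    fun i hi => by
      rw [List.append_cons X c Y]
      exact overlapsBy_append_append_iff (by omega) (by omega)
  have hfull : OverlapsBy (X ++ c :: Y) (Z ++ c :: W) (2 * r + 1) ↔ X = Z ∧ Y = W := by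
    have htake : (Z ++ c :: W).take (2 * r + 1) = Z ++ c :: W := List.take_of_length_le hy.le
    simp only [OverlapsBy, hx, hy, min_self, Nat.sub_self, List.drop_zero, htake, le_refl,
      Nat.le_add_left, true_and]
    constructor
    · intro h
      obtain ⟨hXZ, hYW⟩ := List.append_inj h (hX.trans hZ.symm)
      exact ⟨hXZ, (List.cons_inj_right c).1 hYW⟩
    · rintro ⟨rfl, rfl⟩
      rfl
  constructor
  · rintro ⟨i, hi⟩
    have hi2 := hi.2.1
    rw [hx, hy, min_self] at hi2
    rcases Nat.lt_or_ge r i with hri | hir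
    · rcases Nat.lt_or_ge i (2 * r + 1) with hir' | hir'
      · exact absurd hi (not_overlapsBy_append_cons hX hY hZ hc hri hir')
      · exact Or.inr (hfull.1 (by rwa [show i = 2 * r + 1 by omega] at hi))
    · exact Or.inl ⟨i, (hshort i hir).1 hi⟩
  · rintro (⟨i, hi⟩ | hXY)
    · have hi2 := hi.2.1
      rw [hY, hZ, min_self] at hi2
      exact ⟨i, (hshort i hi2).2 hi⟩
    · exact ⟨2 * r + 1, hfull.2 hXY⟩

end Overlap

section Existence

variable {Vs Vp : Type*}

/-- With a fresh letter `B`, overlaps of length `≤ r` are the old ones, no overlap has length in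
`(r, 2r]`, and the full-length overlap is arranged for the new edge `(a, b)` alone. -/
theorem IsOverlapLabeling.add_edge [DecidableEq Vs] [DecidableEq Vp] {R : Vs → Vp → Prop}
    {r B : ℕ} {ls : Vs → List ℕ} {lp : Vp → List ℕ} (h : IsOverlapLabeling R r ls lp) (hr : 1 ≤ r)
    (hBs : ∀ u, ∀ c ∈ ls u, c < B) (hBp : ∀ v, ∀ c ∈ lp v, c < B) (a : Vs) (b : Vp) :
    IsOverlapLabeling (fun u v => R u v ∨ (u = a ∧ v = b)) (2 * r + 1)
      (fun u => (if u = a then lp b else List.replicate r (B + 1)) ++ B :: ls u)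
      (fun v => lp v ++ B :: if v = b then ls a else List.replicate r (B + 1)) := by
  obtain ⟨hls, hlp, hR⟩ := h
  have hfill : ∀ l : List ℕ, (∀ c ∈ l, c < B) → l ≠ List.replicate r (B + 1) := by
    rintro l hl rfl
    exact absurd (hl (B + 1) (List.mem_replicate.2 ⟨by omega, rfl⟩)) (by omega)
  refine ⟨fun u => ?_, fun v => ?_, fun u v => ?_⟩
  · dsimp only
    split_ifs <;> simp [hls, hlp] <;> omega
  · dsimp only
    split_ifs <;> simp [hls, hlp] <;> omega
  · dsimp only
    rw [exists_overlapsBy_append_cons_iff (r := r) (by split_ifs <;> simp [hlp]) (hls u) (hlp v)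
      (by split_ifs <;> simp [hls]) (fun hB => absurd (hBp v B hB) (lt_irrefl B)), ← hR]
    refine or_congr_right ⟨?_, fun ⟨hX, hY⟩ => ⟨by_contra fun hu => ?_, by_contra fun hv => ?_⟩⟩
    · rintro ⟨rfl, rfl⟩
      simp
    · exact hfill _ (hBp v) (by rw [← hX, if_neg hu])
    · exact hfill _ (hBs u) (by rw [hY, if_neg hv])

theorem exists_isOverlapLabeling_mem_finset (S : Finset (Vs × Vp)) :
    ∃ (r B : ℕ) (ls : Vs → List ℕ) (lp : Vp → List ℕ), 1 ≤ r ∧ (∀ u, ∀ c ∈ ls u, c < B) ∧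
      (∀ v, ∀ c ∈ lp v, c < B) ∧ IsOverlapLabeling (fun u v => (u, v) ∈ S) r ls lp := by
  classical
  induction S using Finset.induction_on with
  | empty =>
    refine ⟨1, 2, fun _ => [0], fun _ => [1], le_rfl, by simp, by simp, fun _ => rfl,
      fun _ => rfl, fun u v => ?_⟩
    simp only [Finset.notMem_empty, false_iff]
    rintro ⟨i, h1, h2, h3⟩
    obtain rfl : i = 1 := by simp at h2; omega
    simp at h3
  | insert e S _ ih =>
    obtain ⟨r, B, ls, lp, hr, hBs, hBp, h⟩ := ih
    have h' := h.add_edge hr hBs hBp e.1 e.2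
    have hrel : (fun u v => (u, v) ∈ S ∨ (u = e.1 ∧ v = e.2)) =
        fun u v => (u, v) ∈ insert e S := by
      ext u v
      simp [Prod.ext_iff, or_comm]
    rw [hrel] at h'
    refine ⟨_, B + 2, _, _, by omega, fun u c hc => ?_, fun v c hc => ?_, h'⟩
    · simp only [List.mem_append, List.mem_cons] at hc
      split_ifs at hc <;> grind
    · simp only [List.mem_append, List.mem_cons] at hc
      split_ifs at hc <;> grind

theorem exists_isOverlapLabeling [Finite Vs] [Finite Vp] (E : Vs → Vp → Prop) :
    ∃ r, ∃ (ls : Vs → List ℕ) (lp : Vp → List ℕ), IsOverlapLabeling E r ls lp := by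
  obtain ⟨r, -, ls, lp, -, -, -, h⟩ :=
    exists_isOverlapLabeling_mem_finset (Set.toFinite {e : Vs × Vp | E e.1 e.2}).toFinset
  exact ⟨r, ls, lp, by simpa using h⟩

theorem exists_isOverlapLabeling_bReadability [Finite Vs] [Finite Vp] (E : Vs → Vp → Prop) :
    ∃ (ls : Vs → List ℕ) (lp : Vp → List ℕ), IsOverlapLabeling E (bReadability E) ls lp :=
  Nat.sInf_mem (exists_isOverlapLabeling E)

end Existence

theorem distinctness_flip {Vs Vp : Type*} (E : Vs → Vp → Prop) :
    distinctness (fun p s => E s p) = distinctness E := by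
  unfold distinctness
  rw [Set.union_comm]

theorem distinctness_le_dtPair {Vs Vp : Type*} (E : Vs → Vp → Prop) {u v : Vs} (h : u ≠ v) :
    distinctness E ≤ DTpair E u v :=
  Nat.sInf_le (Set.mem_union_left _ ⟨u, v, h, rfl⟩)

def SharePrefix {V α : Type*} (f : V → List α) (k : ℕ) : Prop :=
  ∃ a b, a ≠ b ∧ (f a).take k = (f b).take k

namespace IsOverlapLabeling

variable {α Vs Vp : Type*} {E : Vs → Vp → Prop} {r : ℕ} {ls : Vs → List α} {lp : Vp → List α}

theorem flip (h : IsOverlapLabeling E r ls lp) :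
    IsOverlapLabeling (fun p s => E s p) r (fun v => (lp v).reverse) (fun u => (ls u).reverse) :=
  ⟨by simpa using h.2.1, by simpa using h.1, fun v u => by
    simp only [h.2.2 u v, overlapsBy_reverse_iff]⟩

theorem overlapsBy_ov (h : IsOverlapLabeling E r ls lp) {u : Vs} {v : Vp} (he : E u v) :
    OverlapsBy (ls u) (lp v) (ov (ls u) (lp v)) :=
  Nat.sInf_mem ((h.2.2 u v).1 he)

theorem ov_le (h : IsOverlapLabeling E r ls lp) {u : Vs} {v : Vp} (he : E u v) :
    ov (ls u) (lp v) ≤ r := by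
  have := (h.overlapsBy_ov he).2.1
  rwa [h.1, h.2.1, min_self] at this

theorem one_le_ov (h : IsOverlapLabeling E r ls lp) {u : Vs} {v : Vp} (he : E u v) :
    1 ≤ ov (ls u) (lp v) :=
  (h.overlapsBy_ov he).1

theorem ncard_le_or_sharePrefix_reverse (h : IsOverlapLabeling E r ls lp) (a : Vp) {S : Set Vs}
    {k : ℕ} (hS : ∀ s ∈ S, E s a ∧ k < ov (ls s) (lp a)) :
    S.ncard ≤ r - k ∨ ∃ t, k < t ∧ t ≤ r ∧ SharePrefix (fun u => (ls u).reverse) t := by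
  by_contra! hcon
  have hmaps : ∀ s ∈ S, ov (ls s) (lp a) ∈ (Finset.Ioc k r : Set ℕ) := fun s hs => by
    simpa using ⟨(hS s hs).2, h.ov_le (hS s hs).1⟩
  obtain ⟨s, hs, s', hs', hne, heq⟩ := Set.exists_ne_map_eq_of_ncard_lt_of_maps_to
    (by rw [Set.ncard_coe_finset, Nat.card_Ioc]; exact hcon.1) hmaps
  refine hcon.2 _ (hS s hs).2 (h.ov_le (hS s hs).1) ⟨s, s', hne, ?_⟩
  exact (h.overlapsBy_ov (hS s hs).1).take_reverse_eq (heq ▸ h.overlapsBy_ov (hS s' hs').1)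

theorem dtPair_le_or_sharePrefix_reverse (h : IsOverlapLabeling E r ls lp) {a b : Vp} {k : ℕ}
    (hk : (lp a).take k = (lp b).take k) :
    DTpair (fun p s => E s p) a b ≤ r - k ∨
      ∃ t, k < t ∧ t ≤ r ∧ SharePrefix (fun u => (ls u).reverse) t := by
  have side : ∀ a b : Vp, (lp a).take k = (lp b).take k →
      {s | E s a ∧ ¬ E s b}.ncard ≤ r - k ∨
        ∃ t, k < t ∧ t ≤ r ∧ SharePrefix (fun u => (ls u).reverse) t := by
    refine fun a b hk => h.ncard_le_or_sharePrefix_reverse a fun s ⟨hsa, hsb⟩ => ⟨hsa, ?_⟩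
    by_contra! hle
    exact hsb ((h.2.2 s b).2 ⟨_, (h.overlapsBy_ov hsa).of_take_eq hle hk⟩)
  exact (side a b hk).elim (fun h1 => (side b a hk.symm).imp (max_le h1) id) Or.inr

theorem distinctness_le_of_sharePrefix (h : IsOverlapLabeling E r ls lp) (k : ℕ)
    (hk : SharePrefix lp k ∨ SharePrefix (fun u => (ls u).reverse) k) :
    distinctness E ≤ r - k := by
  induction hn : r - k using Nat.strong_induction_on generalizing k with
  | _ n ih =>
    have longer : ∀ t, k < t → t ≤ r →
        (SharePrefix lp t ∨ SharePrefix (fun u => (ls u).reverse) t) → distinctness E ≤ n :=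
      fun t hkt htr ht => (ih (r - t) (by omega) t ht rfl).trans (by omega)
    rcases hk with ⟨a, b, hab, hpre⟩ | ⟨a, b, hab, hpre⟩
    · rcases h.dtPair_le_or_sharePrefix_reverse hpre with hle | ⟨t, hkt, htr, ht⟩
      · rw [← hn, ← distinctness_flip]
        exact (distinctness_le_dtPair _ hab).trans hle
      · exact longer t hkt htr (Or.inr ht)
    · rcases h.flip.dtPair_le_or_sharePrefix_reverse hpre with hle | ⟨t, hkt, htr, ht⟩
      · exact hn ▸ (distinctness_le_dtPair E hab).trans hle
      · exact longer t hkt htr (Or.inl (by simpa using ht))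

theorem distinctness_add_one_le [Finite Vs] (h : IsOverlapLabeling E r ls lp) {u : Vs}
    {p₁ p₂ : Vp} (hne : p₁ ≠ p₂) (h₁ : E u p₁) (h₂ : E u p₂) :
    distinctness E + 1 ≤ r := by
  have side : ∀ a b : Vp, E u a → E u b →
      {s | E s a ∧ ¬ E s b}.ncard + 1 ≤ r ∨
        ∃ t, 0 < t ∧ t ≤ r ∧ SharePrefix (fun u => (ls u).reverse) t := by
    intro a b ha hb
    have hu : u ∉ {s | E s a ∧ ¬ E s b} := fun hu => hu.2 hb
    rw [← Set.ncard_insert_of_notMem hu, ← Nat.sub_zero r]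
    refine h.ncard_le_or_sharePrefix_reverse a fun s hs => ?_
    obtain rfl | hs := Set.mem_insert_iff.1 hs
    · exact ⟨ha, h.one_le_ov ha⟩
    · exact ⟨hs.1, h.one_le_ov hs.1⟩
  have collision : ∀ t, 0 < t → t ≤ r → SharePrefix (fun u => (ls u).reverse) t →
      distinctness E + 1 ≤ r := fun t ht htr hpre => by
    have := h.distinctness_le_of_sharePrefix t (Or.inr hpre)
    omega
  rcases side p₁ p₂ h₁ h₂ with h1 | ⟨t, ht, htr, hpre⟩
  · rcases side p₂ p₁ h₂ h₁ with h2 | ⟨t, ht, htr, hpre⟩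
    · have hDT : DTpair (fun p s => E s p) p₁ p₂ ≤ r - 1 :=
        max_le (Nat.le_sub_one_of_lt h1) (Nat.le_sub_one_of_lt h2)
      have := (distinctness_le_dtPair _ hne).trans hDT
      rw [distinctness_flip] at this
      have hr : 1 ≤ r := (h.one_le_ov h₁).trans (h.ov_le h₁)
      omega
    · exact collision t ht htr hpre
  · exact collision t ht htr hpre

end IsOverlapLabeling

/-- If a bipartite graph `G` is not a matching (some vertex has degree ≥ 2),
then `r(G) ≥ DT(G) + 1`. -/
theorem statement13 {Vs Vp : Type*} [Fintype Vs] [Fintype Vp] (E : Vs → Vp → Prop)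
    (hm : NotMatching E) :
    distinctness E + 1 ≤ bReadability E := by
  obtain ⟨ls, lp, h⟩ := exists_isOverlapLabeling_bReadability E
  rcases hm with ⟨u, p₁, p₂, hne, h₁, h₂⟩ | ⟨p, u₁, u₂, hne, h₁, h₂⟩
  · exact h.distinctness_add_one_le hne h₁ h₂
  · rw [← distinctness_flip]
    exact h.flip.distinctness_add_one_le hne h₁ h₂

end Readability
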